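/- arXiv:2105.03006 — 2 statements merged into one kernel-verified Lean document; each statement's English description precedes it below -/
import Mathlib

section
/- Let W be a simple voting game on [n], let G^Y be the game on [n]∪{0} with winning coalitions W^Y = { S∪{0} : S∈W }, and let P be a voting-independent probability distribution on divisions of [n]∪{0}, i.e. P is the product distribution determined by independent vote probabilities p_k∈[0,1] for each player k∈[n]∪{0}. Then for any players i,j∈[n], the generalized Recursive Measures of YES-voting power RM⁺_i(G) = Σ_{S⊆[n]} α⁺_{i,W}(S)·P_{[n]}(S) (where P_{[n]} is the induced product distribution on divisions of [n]) and RM⁺_i(G^Y) = Σ_{T⊆[n]∪{0}} α⁺_{i,G^Y}(T)·P(T) satisfy RM⁺_i(G^Y)·RM⁺_j(G) = RM⁺_i(G)·RM⁺_j(G^Y); indeed RM⁺_i(G^Y) = p_0·RM⁺_i(G) for every i∈[n]. -/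
open Finset

variable {α : Type*} [Fintype α] [DecidableEq α]

/-- A simple voting game on the player set `α`: a monotone collection of winning
coalitions in which the empty coalition loses and the full coalition wins. -/
def SimpleVotingGame (W : Finset (Finset α)) : Prop :=
  (∀ S T : Finset α, S ∈ W → S ⊆ T → T ∈ W) ∧ (∅ : Finset α) ∉ W ∧ (univ : Finset α) ∈ W

/-- Player `i` is YES-decisive in the division `S`. -/
def YesDecisive (W : Finset (Finset α)) (i : α) (S : Finset α) : Prop :=
  i ∈ S ∧ S ∈ W ∧ S.erase i ∉ W

/-- Player `i` is NO-decisive in the division `S`. -/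
def NoDecisive (W : Finset (Finset α)) (i : α) (S : Finset α) : Prop :=
  i ∉ S ∧ S ∉ W ∧ insert i S ∈ W

/-- The loyal children of a winning division `S`: the winning divisions `S \ {k}`, `k ∈ S`. -/
def LCwin (W : Finset (Finset α)) (S : Finset α) : Finset (Finset α) :=
  (S.image fun k => S.erase k).filter (· ∈ W)

/-- The loyal children of a losing division `S`: the losing divisions `S ∪ {k}`, `k ∉ S`. -/
def LCloss (W : Finset (Finset α)) (S : Finset α) : Finset (Finset α) :=
  (Sᶜ.image fun k => insert k S).filter (· ∉ W)

/-- The YES-efficacy score `α⁺_i(S)`: `1` if `i` is YES-decisive in `S`, `0` if `S` is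
losing or `i ∉ S`, and otherwise the arithmetic mean of `α⁺_i` over the loyal children. -/
noncomputable def alphaPlus (W : Finset (Finset α)) (i : α) (S : Finset α) : ℝ :=
  if i ∈ S ∧ S ∈ W ∧ S.erase i ∉ W then 1
  else if S ∉ W ∨ i ∉ S then 0
  else (∑ T ∈ (LCwin W S).attach, alphaPlus W i T.1) / (LCwin W S).card
termination_by S.card
decreasing_by
  obtain ⟨T, hT⟩ := T
  simp only [LCwin, Finset.mem_filter, Finset.mem_image] at hT
  obtain ⟨⟨k, hk, rfl⟩, -⟩ := hT
  simpa using Finset.card_erase_lt_of_mem hk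

/-- The NO-efficacy score `α⁻_i(S)`: `1` if `i` is NO-decisive in `S`, `0` if `S` is
winning or `i ∈ S`, and otherwise the arithmetic mean of `α⁻_i` over the loyal children. -/
noncomputable def alphaMinus (W : Finset (Finset α)) (i : α) (S : Finset α) : ℝ :=
  if i ∉ S ∧ S ∉ W ∧ insert i S ∈ W then 1
  else if S ∈ W ∨ i ∈ S then 0
  else (∑ T ∈ (LCloss W S).attach, alphaMinus W i T.1) / (LCloss W S).card
termination_by Sᶜ.card
decreasing_by
  obtain ⟨T, hT⟩ := T
  simp only [LCloss, Finset.mem_filter, Finset.mem_image] at hT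
  obtain ⟨⟨k, hk, rfl⟩, -⟩ := hT
  rw [Finset.compl_insert]
  exact Finset.card_erase_lt_of_mem hk

/-- The efficacy score `α_i(S) = α⁺_i(S) + α⁻_i(S)`. -/
noncomputable def alphaScore (W : Finset (Finset α)) (i : α) (S : Finset α) : ℝ :=
  alphaPlus W i S + alphaMinus W i S

/-- The Recursive Measure of YES-voting power (a priori, equiprobable divisions). -/
noncomputable def RMplus (W : Finset (Finset α)) (i : α) : ℝ :=
  (1 / 2 ^ Fintype.card α) * ∑ S : Finset α, alphaPlus W i S

/-- The Recursive Measure of NO-voting power (a priori, equiprobable divisions). -/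
noncomputable def RMminus (W : Finset (Finset α)) (i : α) : ℝ :=
  (1 / 2 ^ Fintype.card α) * ∑ S : Finset α, alphaMinus W i S

/-- The Recursive Measure of voting power of player `i` (a priori):
`RM_i = 2^{-m} · Σ_S α_i(S)` where `m` is the number of players. -/
noncomputable def RM (W : Finset (Finset α)) (i : α) : ℝ :=
  (1 / 2 ^ Fintype.card α) * ∑ S : Finset α, alphaScore W i S

/-- `d` is a dummy voter: `d` is decisive in no division. -/
def IsDummy (W : Finset (Finset α)) (d : α) : Prop :=
  ∀ S : Finset α, d ∉ S → (insert d S ∈ W ↔ S ∈ W)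

/-- Player `j` weakly dominates player `i`. -/
def WeaklyDominates (W : Finset (Finset α)) (j i : α) : Prop :=
  ∀ S : Finset α, i ∉ S → j ∉ S → insert i S ∈ W → insert j S ∈ W

/-- `What` is the game obtained from `W` by player `j` donating its vote to player `i`. -/
def Donation (W What : Finset (Finset α)) (i j : α) : Prop :=
  ∀ S : Finset α, i ∉ S → j ∉ S →
    (insert i (insert j S) ∈ What ↔ insert i (insert j S) ∈ W) ∧
    (insert i S ∈ What ↔ insert i (insert j S) ∈ W) ∧
    (insert j S ∈ What ↔ S ∈ W) ∧
    (S ∈ What ↔ S ∈ W)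

/-- `What` is obtained from `W` by inducing a (weak, symmetric) quarrel between `i` and `j`. -/
def Quarrel (W What : Finset (Finset α)) (i j : α) : Prop :=
  ∀ S : Finset α, i ∉ S → j ∉ S →
    (insert i (insert j S) ∈ What ↔ (insert i S ∈ W ∨ insert j S ∈ W)) ∧
    (S ∈ What ↔ (insert i S ∈ W ∧ insert j S ∈ W)) ∧
    (insert i S ∈ What ↔ insert i S ∈ W) ∧
    (insert j S ∈ What ↔ insert j S ∈ W)

/-- The voting-independent (product) probability of a division `S`, given the
individual YES-vote probabilities `p`. -/
noncomputable def prodDist (p : α → ℝ) (S : Finset α) : ℝ :=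
  (∏ k ∈ S, p k) * ∏ k ∈ Sᶜ, (1 - p k)

/-- The generalized Recursive Measure of YES-voting power under a
voting-independent probability distribution with vote probabilities `p`. -/
noncomputable def RMplusP (W : Finset (Finset α)) (p : α → ℝ) (i : α) : ℝ :=
  ∑ S : Finset α, alphaPlus W i S * prodDist p S

/-- The generalized Recursive Measure of NO-voting power under a
voting-independent probability distribution with vote probabilities `p`. -/
noncomputable def RMminusP (W : Finset (Finset α)) (p : α → ℝ) (i : α) : ℝ :=
  ∑ S : Finset α, alphaMinus W i S * prodDist p S

/-!
Encode the added YES-blocker `0` as `none` and the old players `k` as `some k`. The divisions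
of the new game that can win are the `S ∪ {0}`, `S ⊆ [n]`: a division without `0` is losing, so its score is `0`, and
`S ↦ S ∪ {0}` maps the loyal children of `S` in `W` bijectively onto those of `S ∪ {0}` in `W^Y`,
so the recursion gives `α⁺_{i,W^Y}(S ∪ {0}) = α⁺_{i,W}(S)`. Since `P(S ∪ {0}) = p₀ · P_{[n]}(S)`,
summing yields `RM⁺_i(G^Y) = p₀ · RM⁺_i(G)`, and the cross-ratio identity follows.
-/

section

variable {β : Type*} [DecidableEq β]

def addYesBlocker (W : Finset (Finset β)) : Finset (Finset (Option β)) :=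
  W.image insertNone

lemma addYesBlocker_eq_image (W : Finset (Finset β)) :
    addYesBlocker W = W.image fun S => insert none (S.image some) := by
  unfold addYesBlocker
  congr 1
  funext S
  ext (_ | k) <;> simp

lemma insertNone_erase (S : Finset β) (i : β) :
    insertNone (S.erase i) = (insertNone S).erase (some i) := by
  ext (_ | k) <;> simp

lemma insertNone_mem_addYesBlocker {W : Finset (Finset β)} {S : Finset β} :
    insertNone S ∈ addYesBlocker W ↔ S ∈ W :=
  insertNone.injective.mem_finset_image

lemma LCwin_addYesBlocker_insertNone (W : Finset (Finset β)) (S : Finset β) :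
    LCwin (addYesBlocker W) (insertNone S) = (LCwin W S).image insertNone := by
  ext T
  simp only [LCwin, mem_filter, mem_image]
  constructor
  · rintro ⟨⟨k, hk, rfl⟩, hT⟩
    cases k with
    | none =>
      obtain ⟨S', -, hS'⟩ := mem_image.mp hT
      have hnone : none ∈ (insertNone S).erase none := hS' ▸ none_mem_insertNone
      simp at hnone
    | some k =>
      rw [← insertNone_erase, insertNone_mem_addYesBlocker] at hT
      exact ⟨S.erase k, ⟨⟨k, some_mem_insertNone.mp hk, rfl⟩, hT⟩, insertNone_erase S k⟩
  · rintro ⟨_, ⟨⟨k, hk, rfl⟩, hW⟩, rfl⟩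
    exact ⟨⟨some k, some_mem_insertNone.mpr hk, (insertNone_erase S k).symm⟩,
      insertNone_mem_addYesBlocker.mpr hW⟩

lemma alphaPlus_of_notMem {W : Finset (Finset β)} {S : Finset β} (i : β) (hS : S ∉ W) :
    alphaPlus W i S = 0 := by
  rw [alphaPlus, if_neg fun h => hS h.2.1, if_pos (Or.inl hS)]

lemma ssubset_of_mem_LCwin {W : Finset (Finset β)} {S T : Finset β} (hT : T ∈ LCwin W S) :
    T ⊂ S := by
  obtain ⟨⟨k, hk, rfl⟩, -⟩ := by simpa only [LCwin, mem_filter, mem_image] using hT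
  exact erase_ssubset hk

lemma alphaPlus_addYesBlocker_insertNone (W : Finset (Finset β)) (i : β) (S : Finset β) :
    alphaPlus (addYesBlocker W) (some i) (insertNone S) = alphaPlus W i S := by
  induction S using Finset.strongInduction with
  | H S ih =>
    have hchildren : ∑ T ∈ LCwin (addYesBlocker W) (insertNone S),
        alphaPlus (addYesBlocker W) (some i) T = ∑ T ∈ LCwin W S, alphaPlus W i T := by
      rw [LCwin_addYesBlocker_insertNone, sum_image fun _ _ _ _ h => insertNone.injective h]
      exact sum_congr rfl fun T hT => ih T (ssubset_of_mem_LCwin hT)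
    rw [alphaPlus.eq_1 (addYesBlocker W), alphaPlus.eq_1 W]
    simp only [some_mem_insertNone, insertNone_mem_addYesBlocker, ← insertNone_erase, sum_attach,
      hchildren]
    rw [LCwin_addYesBlocker_insertNone, card_image_of_injective _ insertNone.injective]

end

lemma compl_insertNone (S : Finset α) : (insertNone S)ᶜ = Sᶜ.map Function.Embedding.some := by
  ext (_ | k) <;> simp

lemma prodDist_insertNone (p : Option α → ℝ) (S : Finset α) :
    prodDist p (insertNone S) = p none * prodDist (fun k => p (some k)) S := by
  rw [prodDist, prodDist, prod_insertNone, compl_insertNone, prod_map]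
  simp only [Function.Embedding.some_apply]
  ring

lemma RMplusP_addYesBlocker (W : Finset (Finset α)) (p : Option α → ℝ) (i : α) :
    RMplusP (addYesBlocker W) p (some i) = p none * RMplusP W (fun k => p (some k)) i := by
  rw [RMplusP, RMplusP, mul_sum]
  refine (Fintype.sum_of_injective insertNone insertNone.injective _ _ (fun T hT => ?_)
    (fun S => ?_)).symm
  · rw [alphaPlus_of_notMem _ fun hW => hT ?_, zero_mul]
    obtain ⟨S, -, rfl⟩ := mem_image.mp hW
    exact ⟨S, rfl⟩
  · rw [alphaPlus_addYesBlocker_insertNone, prodDist_insertNone]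
    ring

theorem added_yes_blocker_prob_general {n : ℕ} (W : Finset (Finset (Fin n)))
    (WY : Finset (Finset (Option (Fin n))))
    (hWY : WY = W.image (fun S => insert none (S.image some)))
    (p : Option (Fin n) → ℝ) :
    (∀ i j : Fin n,
      RMplusP WY p (some i) * RMplusP W (fun k => p (some k)) j =
        RMplusP W (fun k => p (some k)) i * RMplusP WY p (some j)) ∧
    (∀ i : Fin n,
      RMplusP WY p (some i) = p none * RMplusP W (fun k => p (some k)) i) := by
  rw [hWY, ← addYesBlocker_eq_image]
  exact ⟨fun i j => by rw [RMplusP_addYesBlocker, RMplusP_addYesBlocker]; ring,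
    RMplusP_addYesBlocker W p⟩

/-- an added YES-blocker preserves relative generalized YES-power under any
voting-independent probability distribution; indeed `RM⁺_i(G^Y) = p_0 · RM⁺_i(G)`. -/
theorem added_yes_blocker_prob {n : ℕ} (W : Finset (Finset (Fin n)))
    (hW : SimpleVotingGame W)
    (WY : Finset (Finset (Option (Fin n))))
    (hWY : WY = W.image (fun S => insert none (S.image some)))
    (p : Option (Fin n) → ℝ) (hp : ∀ k, 0 ≤ p k ∧ p k ≤ 1) :
    (∀ i j : Fin n,
      RMplusP WY p (some i) * RMplusP W (fun k => p (some k)) j =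
        RMplusP W (fun k => p (some k)) i * RMplusP WY p (some j)) ∧
    (∀ i : Fin n,
      RMplusP WY p (some i) = p none * RMplusP W (fun k => p (some k)) i) :=
  added_yes_blocker_prob_general W WY hWY p
end

section
/- Let W be a simple voting game on [n], let G^N be the game on [n]∪{0} with winning coalitions W^N = { S∪{0} : S⊆[n] } ∪ W, and let P be a voting-independent probability distribution on divisions of [n]∪{0}, i.e. the product distribution determined by independent vote probabilities p_k∈[0,1] for each player k∈[n]∪{0}. Then for any players i,j∈[n], the generalized Recursive Measures of NO-voting power RM⁻_i(G) = Σ_{S⊆[n]} α⁻_{i,W}(S)·P_{[n]}(S) (where P_{[n]} is the induced product distribution on divisions of [n]) and RM⁻_i(G^N) = Σ_{T⊆[n]∪{0}} α⁻_{i,G^N}(T)·P(T) satisfy RM⁻_i(G^N)·RM⁻_j(G) = RM⁻_i(G)·RM⁻_j(G^N); indeed RM⁻_i(G^N) = (1−p_0)·RM⁻_i(G) for every i∈[n]. -/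
open Finset

variable {α : Type*} [Fintype α] [DecidableEq α]

/-!
Every division containing the blocker `0` wins in `G^N`, so `α⁻_i` vanishes on it. A division
`S ⊆ [n]` wins in `G^N` iff it wins in `G`, and adding `0` to a losing one makes it win, so its
loyal children are the same in both games; by recursion `α⁻_{i,G^N}(S) = α⁻_{i,G}(S)`. Since
`P(S) = (1 - p₀) · P_{[n]}(S)`, this gives `RM⁻_i(G^N) = (1 - p₀) · RM⁻_i(G)`.
-/

lemma alphaMinus_eq_zero_of_mem {W : Finset (Finset α)} (i : α) {S : Finset α} (hS : S ∈ W) :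
    alphaMinus W i S = 0 := by
  rw [alphaMinus, if_neg fun h => h.2.1 hS, if_pos (Or.inl hS)]

lemma sum_finset_option_eq_sum_image_some {M : Type*} [AddCommMonoid M]
    (f : Finset (Option α) → M) (hf : ∀ T, none ∈ T → f T = 0) :
    ∑ T, f T = ∑ S : Finset α, f (S.image some) := by
  rw [← sum_image fun S _ S' _ h => image_injective (Option.some_injective α) h]
  refine (sum_subset (subset_univ _) fun T _ hT => hf T ?_).symm
  by_contra hnone
  exact hT (mem_image.2 ⟨eraseNone T, mem_univ _, by
    rw [image_some_eraseNone, erase_eq_of_notMem hnone]⟩)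

lemma prodDist_image_some (p : Option α → ℝ) (S : Finset α) :
    prodDist p (S.image some) = (1 - p none) * prodDist (fun k => p (some k)) S := by
  have hcompl : (S.image some)ᶜ = insert none (Sᶜ.image some) := by
    ext (_ | k) <;> simp
  have hinj (s : Finset α) : Set.InjOn some (s : Set α) := (Option.some_injective α).injOn
  rw [prodDist, prodDist, hcompl, prod_insert (by simp), prod_image (hinj _), prod_image (hinj _)]
  ring

/-- The game `G^N` on `Option α`, where `none` plays the added NO-blocker `0`. -/
def addNoBlocker (W : Finset (Finset α)) : Finset (Finset (Option α)) :=
  (univ : Finset (Finset α)).image (fun S => insert none (S.image some)) ∪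
    W.image (fun S => S.image some)

section addNoBlocker

variable {W : Finset (Finset α)}

lemma mem_addNoBlocker_of_none_mem {T : Finset (Option α)} (hT : none ∈ T) :
    T ∈ addNoBlocker W :=
  mem_union_left _ <| mem_image.2 ⟨eraseNone T, mem_univ _, by
    rw [image_some_eraseNone, insert_erase hT]⟩

lemma image_some_mem_addNoBlocker_iff (S : Finset α) :
    S.image some ∈ addNoBlocker W ↔ S ∈ W := by
  simp only [addNoBlocker, mem_union, mem_image, mem_univ, true_and,
    (image_injective (Option.some_injective α)).eq_iff, exists_eq_right]
  refine or_iff_right fun ⟨U, hU⟩ => ?_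
  have hnone : none ∈ S.image some := hU ▸ mem_insert_self _ _
  simp at hnone

lemma LCloss_addNoBlocker_image_some (S : Finset α) :
    LCloss (addNoBlocker W) (S.image some) = (LCloss W S).image (image some) := by
  ext T
  simp only [LCloss, mem_filter, mem_image, mem_compl]
  constructor
  · rintro ⟨⟨(_ | m), hk, rfl⟩, hT⟩
    · exact absurd (mem_addNoBlocker_of_none_mem (mem_insert_self _ _)) hT
    · rw [← image_insert, image_some_mem_addNoBlocker_iff] at hT
      rw [← image_insert]
      exact ⟨insert m S, ⟨⟨m, by simpa using hk, rfl⟩, hT⟩, rfl⟩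
  · rintro ⟨U, ⟨⟨m, hm, rfl⟩, hU⟩, rfl⟩
    exact ⟨⟨some m, by simpa using hm, (image_insert _ _ _).symm⟩,
      by rwa [image_some_mem_addNoBlocker_iff]⟩

lemma alphaMinus_addNoBlocker_image_some (i : α) (S : Finset α) :
    alphaMinus (addNoBlocker W) (some i) (S.image some) = alphaMinus W i S := by
  have hinj : Set.InjOn (image (some : α → Option α)) (LCloss W S : Set (Finset α)) :=
    (image_injective (Option.some_injective α)).injOn
  rw [alphaMinus, alphaMinus, LCloss_addNoBlocker_image_some,
    sum_attach _ (alphaMinus _ (some i)), sum_attach _ (alphaMinus W i),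
    sum_image hinj, card_image_of_injOn hinj]
  simp only [← image_insert, image_some_mem_addNoBlocker_iff, mem_image, Option.some_inj,
    exists_eq_right]
  congr 3
  exact sum_congr rfl fun U hU => alphaMinus_addNoBlocker_image_some i U
termination_by Sᶜ.card
decreasing_by
  simp only [LCloss, mem_filter, mem_image] at hU
  obtain ⟨⟨k, hk, rfl⟩, -⟩ := hU
  rw [compl_insert]
  exact card_erase_lt_of_mem hk

lemma RMminusP_addNoBlocker (p : Option α → ℝ) (i : α) :
    RMminusP (addNoBlocker W) p (some i) = (1 - p none) * RMminusP W (fun k => p (some k)) i := by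
  rw [RMminusP, RMminusP, mul_sum, sum_finset_option_eq_sum_image_some _ fun T hT => by
    rw [alphaMinus_eq_zero_of_mem _ (mem_addNoBlocker_of_none_mem hT), zero_mul]]
  refine sum_congr rfl fun S _ => ?_
  rw [alphaMinus_addNoBlocker_image_some, prodDist_image_some]
  ring

end addNoBlocker

theorem added_no_blocker_prob_general {n : ℕ} (W : Finset (Finset (Fin n)))
    (WN : Finset (Finset (Option (Fin n))))
    (hWN : WN = (univ : Finset (Finset (Fin n))).image (fun S => insert none (S.image some)) ∪
      W.image (fun S => S.image some))
    (p : Option (Fin n) → ℝ) :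
    (∀ i j : Fin n,
      RMminusP WN p (some i) * RMminusP W (fun k => p (some k)) j =
        RMminusP W (fun k => p (some k)) i * RMminusP WN p (some j)) ∧
    (∀ i : Fin n,
      RMminusP WN p (some i) = (1 - p none) * RMminusP W (fun k => p (some k)) i) := by
  obtain rfl : WN = addNoBlocker W := hWN
  refine ⟨fun i j => ?_, RMminusP_addNoBlocker p⟩
  rw [RMminusP_addNoBlocker, RMminusP_addNoBlocker]
  ring

/-- an added NO-blocker preserves relative generalized NO-power under any
voting-independent probability distribution; indeed `RM⁻_i(G^N) = (1 - p_0) · RM⁻_i(G)`. -/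
theorem added_no_blocker_prob {n : ℕ} (W : Finset (Finset (Fin n)))
    (hW : SimpleVotingGame W)
    (WN : Finset (Finset (Option (Fin n))))
    (hWN : WN = (univ : Finset (Finset (Fin n))).image (fun S => insert none (S.image some)) ∪
      W.image (fun S => S.image some))
    (p : Option (Fin n) → ℝ) (hp : ∀ k, 0 ≤ p k ∧ p k ≤ 1) :
    (∀ i j : Fin n,
      RMminusP WN p (some i) * RMminusP W (fun k => p (some k)) j =
        RMminusP W (fun k => p (some k)) i * RMminusP WN p (some j)) ∧
    (∀ i : Fin n,
      RMminusP WN p (some i) = (1 - p none) * RMminusP W (fun k => p (some k)) i) :=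
  added_no_blocker_prob_general W WN hWN p
end
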